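/- Let y ∈ ℝ³ satisfy e^{y_i} + e^{y_j} > e^{y_k} for every permutation (i,j,k) of (1,2,3), and let (a₁, a₂, a₃) be the inner angles of the Euclidean triangle of edge lengths e^{y₁}, e^{y₂}, e^{y₃} with a_i opposite the edge of length e^{y_i}. Then the function g(x) = Σ_{i=1}³ (x_i y_i + Λ(x_i)) on the closed simplex {x ∈ ℝ³ : x_i ≥ 0, x₁ + x₂ + x₃ = π} attains its maximum at x = (a₁, a₂, a₃), and this is the unique maximum point: g(x) < g(a) for every x in the closed simplex with x ≠ a. -/

import Mathlib

/-! The gradient of `g(θ) = ∑ (θ_i y_i + Λ(θ_i))` is `y_i - log (2 sin θ_i)`. By the law of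
sines `e^{y_i} = d sin a_i`, so at the angles `a` the gradient is constant and `a` is a critical
point of `g` on the simplex. The Hessian `-diag (cot θ_i)` is negative definite on `{∑ v_i = 0}`
whenever the `θ_i` are the angles of a triangle, because `sin θ₀ sin θ₁ sin θ₂ ∑ v_i² cot θ_i` is a
sum of two squares. Hence `g` strictly decreases along the segment from `a` to any other point of
the simplex. -/

/-- The Lobachevsky function `Λ(t) = -∫₀ᵗ log |2 sin s| ds`. -/
noncomputable def Lob (t : ℝ) : ℝ := -∫ s in (0 : ℝ)..t, Real.log |2 * Real.sin s|

/-- The inner angle, opposite the edge of length `x i`, of the (generalized) Euclidean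
triangle of edge lengths `x 0, x 1, x 2` (clamped arccos convention). -/
noncomputable def ang (i : Fin 3) (x : Fin 3 → ℝ) : ℝ :=
  Real.arccos (((x (i + 1)) ^ 2 + (x (i + 2)) ^ 2 - (x i) ^ 2) / (2 * x (i + 1) * x (i + 2)))

open Real MeasureTheory Set

theorem intervalIntegrable_log_abs_two_mul_sin (a b : ℝ) :
    IntervalIntegrable (fun s => log |2 * sin s|) volume a b :=
  (analyticOnNhd_const.mul analyticOnNhd_sin).meromorphicOn.intervalIntegrable_log_norm

@[fun_prop]
theorem continuous_Lob : Continuous Lob :=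
  (intervalIntegral.continuous_primitive intervalIntegrable_log_abs_two_mul_sin 0).neg

theorem hasDerivAt_Lob {t : ℝ} (ht : sin t ≠ 0) : HasDerivAt Lob (-log (2 * sin t)) t := by
  have hcont : ContinuousAt (fun s => log |2 * sin s|) t :=
    ((continuous_const.mul continuous_sin).abs.continuousAt).log (by simpa using ht)
  rw [← log_abs]
  have hmeas : Measurable fun s => log |2 * sin s| := by fun_prop
  exact (intervalIntegral.integral_hasDerivAt_right (intervalIntegrable_log_abs_two_mul_sin 0 t)
    hmeas.stronglyMeasurable.stronglyMeasurableAtFilter hcont).neg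

/-- Sixteen times the squared area of the triangle with edge lengths `x 0, x 1, x 2` (Heron). -/
def heron (x : Fin 3 → ℝ) : ℝ :=
  2 * (x 0 ^ 2 * x 1 ^ 2 + x 1 ^ 2 * x 2 ^ 2 + x 2 ^ 2 * x 0 ^ 2) - (x 0 ^ 4 + x 1 ^ 4 + x 2 ^ 4)

section Triangle

variable {x : Fin 3 → ℝ}

theorem heron_eq_sq_sub_sq (x : Fin 3 → ℝ) (i : Fin 3) :
    heron x = (2 * x (i + 1) * x (i + 2)) ^ 2 - (x (i + 1) ^ 2 + x (i + 2) ^ 2 - x i ^ 2) ^ 2 := by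
  fin_cases i <;> simp [heron] <;> ring

theorem heron_pos (hx : ∀ i, 0 < x i) (htri : ∀ i, x i < x (i + 1) + x (i + 2)) :
    0 < heron x := by
  have h0 := htri 0
  have h1 := htri 1
  have h2 := htri 2
  simp only [Fin.isValue, Fin.reduceAdd] at h0 h1 h2
  have hprod : heron x =
      (x 0 + x 1 + x 2) * (x 1 + x 2 - x 0) * (x 2 + x 0 - x 1) * (x 0 + x 1 - x 2) := by
    unfold heron; ring
  rw [hprod]
  have := hx 0; have := hx 1; have := hx 2
  apply mul_pos (mul_pos (mul_pos _ _) _) _ <;> linarith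

theorem two_mul_mul_pos (hx : ∀ i, 0 < x i) (i : Fin 3) : 0 < 2 * x (i + 1) * x (i + 2) := by
  have := hx (i + 1); have := hx (i + 2); positivity

theorem abs_cos_ang_arg_lt_one (hx : ∀ i, 0 < x i) (hH : 0 < heron x) (i : Fin 3) :
    |(x (i + 1) ^ 2 + x (i + 2) ^ 2 - x i ^ 2) / (2 * x (i + 1) * x (i + 2))| < 1 := by
  have hden := two_mul_mul_pos hx i
  rw [← sq_lt_one_iff_abs_lt_one, div_pow, div_lt_one (by positivity)]
  linarith [heron_eq_sq_sub_sq x i]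

theorem cos_ang (hx : ∀ i, 0 < x i) (hH : 0 < heron x) (i : Fin 3) :
    cos (ang i x) = (x (i + 1) ^ 2 + x (i + 2) ^ 2 - x i ^ 2) / (2 * x (i + 1) * x (i + 2)) := by
  have := abs_lt.mp (abs_cos_ang_arg_lt_one hx hH i)
  exact cos_arccos this.1.le this.2.le

theorem sin_ang (hx : ∀ i, 0 < x i) (i : Fin 3) :
    sin (ang i x) = √(heron x) / (2 * x (i + 1) * x (i + 2)) := by
  have hden := two_mul_mul_pos hx i
  have h : 1 - ((x (i + 1) ^ 2 + x (i + 2) ^ 2 - x i ^ 2) / (2 * x (i + 1) * x (i + 2))) ^ 2 =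
      heron x / (2 * x (i + 1) * x (i + 2)) ^ 2 := by
    have := hx (i + 1); have := hx (i + 2)
    rw [heron_eq_sq_sub_sq x i]
    field_simp
  rw [ang, sin_arccos, h, sqrt_div' _ (sq_nonneg _), sqrt_sq hden.le]

theorem ang_pos (hx : ∀ i, 0 < x i) (hH : 0 < heron x) (i : Fin 3) : 0 < ang i x :=
  arccos_pos.mpr (abs_lt.mp (abs_cos_ang_arg_lt_one hx hH i)).2

theorem ang_add_ang_add_ang (hx : ∀ i, 0 < x i) (htri : ∀ i, x i < x (i + 1) + x (i + 2)) :
    ang 0 x + ang 1 x + ang 2 x = π := by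
  have hH := heron_pos hx htri
  have h0 := htri 0; have h1 := htri 1
  have := hx 0; have := hx 1; have := hx 2
  simp only [Fin.isValue, Fin.reduceAdd] at h0 h1
  have hle : ang 0 x + ang 1 x ≤ π := by
    have hsum : (x 1 ^ 2 + x 2 ^ 2 - x 0 ^ 2) / (2 * x 1 * x 2) +
        (x 2 ^ 2 + x 0 ^ 2 - x 1 ^ 2) / (2 * x 2 * x 0) =
        (x 0 + x 1) * (x 2 - x 0 + x 1) * (x 2 + x 0 - x 1) / (2 * x 0 * x 1 * x 2) := by
      field_simp
      ring
    have hnonneg :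
        0 ≤ (x 0 + x 1) * (x 2 - x 0 + x 1) * (x 2 + x 0 - x 1) / (2 * x 0 * x 1 * x 2) :=
      div_nonneg (mul_nonneg (mul_nonneg (by linarith) (by linarith)) (by linarith))
        (by positivity)
    have := arccos_le_arccos (x := -((x 2 ^ 2 + x 0 ^ 2 - x 1 ^ 2) / (2 * x 2 * x 0)))
      (y := (x 1 ^ 2 + x 2 ^ 2 - x 0 ^ 2) / (2 * x 1 * x 2)) (by linarith)
    rw [arccos_neg] at this
    simp only [ang, Fin.isValue, Fin.reduceAdd]
    linarith
  have hcos : cos (ang 0 x + ang 1 x) = -cos (ang 2 x) := by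
    rw [cos_add, cos_ang hx hH, cos_ang hx hH, cos_ang hx hH, sin_ang hx, sin_ang hx]
    simp only [Fin.isValue, Fin.reduceAdd]
    field_simp
    rw [sq_sqrt hH.le, heron]
    ring
  have := arccos_cos (x := ang 0 x + ang 1 x) (add_nonneg (arccos_nonneg _) (arccos_nonneg _)) hle
  rw [hcos, arccos_neg, arccos_cos (x := ang 2 x) (arccos_nonneg _) (arccos_le_pi _)] at this
  linarith

theorem exists_eq_mul_sin_ang (hx : ∀ i, 0 < x i) (hH : 0 < heron x) :
    ∃ d > 0, ∀ i, x i = d * sin (ang i x) := by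
  refine ⟨2 * (x 0 * x 1 * x 2) / √(heron x), ?_, fun i => ?_⟩
  · have := hx 0; have := hx 1; have := hx 2; have := sqrt_pos.mpr hH; positivity
  · have hprod : x 0 * x 1 * x 2 = x i * x (i + 1) * x (i + 2) := by
      fin_cases i <;> simp <;> ring
    have := sqrt_pos.mpr hH
    have := hx (i + 1); have := hx (i + 2)
    rw [sin_ang hx i, hprod]
    field_simp

end Triangle

theorem sin_pos_of_sum_eq_pi {ι : Type*} [Fintype ι] [Nontrivial ι] {θ : ι → ℝ}
    (hθ : ∀ i, 0 < θ i) (hsum : ∑ i, θ i = π) (i : ι) : 0 < sin (θ i) := by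
  obtain ⟨j, hji⟩ := exists_ne i
  refine sin_pos_of_pos_of_lt_pi (hθ i) (hsum ▸ ?_)
  exact Finset.single_lt_sum hji (Finset.mem_univ i) (Finset.mem_univ j) (hθ j)
    fun k _ _ => (hθ k).le

theorem sum_sq_mul_cot_pos {θ v : Fin 3 → ℝ} (hθ : ∀ i, 0 < θ i) (hθsum : ∑ i, θ i = π)
    (hv : ∑ i, v i = 0) (hv0 : v ≠ 0) : 0 < ∑ i, v i ^ 2 * cot (θ i) := by
  have hs := sin_pos_of_sum_eq_pi hθ hθsum
  simp only [Fin.sum_univ_three, cot_eq_cos_div_sin] at hθsum hv ⊢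
  have e0 : sin (θ 0) = cos (θ 1) * sin (θ 2) + cos (θ 2) * sin (θ 1) := by
    rw [show θ 0 = π - (θ 1 + θ 2) by linarith, sin_pi_sub, sin_add]; ring
  have e1 : sin (θ 1) = cos (θ 0) * sin (θ 2) + cos (θ 2) * sin (θ 0) := by
    rw [show θ 1 = π - (θ 0 + θ 2) by linarith, sin_pi_sub, sin_add]; ring
  have hv2 : v 2 = -(v 0 + v 1) := by linarith
  have := hs 0; have := hs 1; have := hs 2
  have hsos : sin (θ 0) * sin (θ 1) * sin (θ 2) *
      (v 0 ^ 2 * (cos (θ 0) / sin (θ 0)) + v 1 ^ 2 * (cos (θ 1) / sin (θ 1)) +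
        v 2 ^ 2 * (cos (θ 2) / sin (θ 2))) =
      (sin (θ 1) * v 0 + cos (θ 2) * sin (θ 0) * v 1) ^ 2 + (sin (θ 0) * sin (θ 2) * v 1) ^ 2 := by
    have hclear : sin (θ 0) * sin (θ 1) * sin (θ 2) *
        (v 0 ^ 2 * (cos (θ 0) / sin (θ 0)) + v 1 ^ 2 * (cos (θ 1) / sin (θ 1)) +
          v 2 ^ 2 * (cos (θ 2) / sin (θ 2))) =
        v 0 ^ 2 * cos (θ 0) * sin (θ 1) * sin (θ 2) + v 1 ^ 2 * cos (θ 1) * sin (θ 0) * sin (θ 2)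
          + v 2 ^ 2 * cos (θ 2) * sin (θ 0) * sin (θ 1) := by
      field_simp
    rw [hclear, hv2]
    linear_combination (-(v 0 ^ 2 * sin (θ 1))) * e1 + (-(v 1 ^ 2 * sin (θ 0))) * e0
      + (-(v 1 ^ 2 * sin (θ 0) ^ 2)) * sin_sq_add_cos_sq (θ 2)
  have hsos_pos : 0 < (sin (θ 1) * v 0 + cos (θ 2) * sin (θ 0) * v 1) ^ 2
      + (sin (θ 0) * sin (θ 2) * v 1) ^ 2 := by
    by_cases hv1 : v 1 = 0
    · have hv0' : v 0 ≠ 0 := fun h => hv0 (by ext i; fin_cases i <;> simp [h, hv1, hv2])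
      have : 0 < (sin (θ 1) * v 0) ^ 2 := by positivity
      simpa [hv1] using this
    · positivity
  exact pos_of_mul_pos_right (hsos ▸ hsos_pos) (by positivity)

section Segment

variable {ι : Type*} [Fintype ι] {a v : ι → ℝ} {t : ℝ}

theorem hasDerivAt_sum_mul_log_two_mul_sin (h : ∀ i, sin (a i + t * v i) ≠ 0) :
    HasDerivAt (fun s => ∑ i, v i * log (2 * sin (a i + s * v i)))
      (∑ i, v i ^ 2 * cot (a i + t * v i)) t := by
  refine HasDerivAt.fun_sum fun i _ => ?_
  have := ((((hasDerivAt_mul_const (v i)).const_add (a i)).sin).const_mul 2).log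
    (mul_ne_zero two_ne_zero (h i))
  refine (this.const_mul (v i)).congr_deriv ?_
  rw [cot_eq_cos_div_sin]
  field_simp [h i]

theorem hasDerivAt_sum_mul_add_Lob (y : ι → ℝ) (h : ∀ i, sin (a i + t * v i) ≠ 0) :
    HasDerivAt (fun s => ∑ i, ((a i + s * v i) * y i + Lob (a i + s * v i)))
      (∑ i, v i * (y i - log (2 * sin (a i + t * v i)))) t := by
  refine HasDerivAt.fun_sum fun i _ => ?_
  have hline := (hasDerivAt_mul_const (v i)).const_add (a i) (x := t)
  refine ((hline.mul_const (y i)).add ((hasDerivAt_Lob (h i)).comp t hline)).congr_deriv ?_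
  ring

end Segment

theorem strictMonoOn_sum_mul_log_two_mul_sin {a v : Fin 3 → ℝ}
    (hseg : ∀ t ∈ Ico (0 : ℝ) 1, ∀ i, 0 < a i + t * v i) (hasum : ∑ i, a i = π)
    (hvsum : ∑ i, v i = 0) (hv0 : v ≠ 0) :
    StrictMonoOn (fun s => ∑ i, v i * log (2 * sin (a i + s * v i))) (Ico 0 1) := by
  have hseg_sum : ∀ t, ∑ i, (a i + t * v i) = π := fun t => by
    simp [Finset.sum_add_distrib, ← Finset.mul_sum, hvsum, hasum]
  have hderiv : ∀ t ∈ Ico (0 : ℝ) 1, HasDerivAt (fun s => ∑ i, v i * log (2 * sin (a i + s * v i)))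
      (∑ i, v i ^ 2 * cot (a i + t * v i)) t := fun t ht =>
    hasDerivAt_sum_mul_log_two_mul_sin fun i =>
      (sin_pos_of_sum_eq_pi (hseg t ht) (hseg_sum t) i).ne'
  refine strictMonoOn_of_deriv_pos (convex_Ico 0 1)
    (fun t ht => (hderiv t ht).continuousAt.continuousWithinAt) fun t ht => ?_
  rw [interior_Ico] at ht
  rw [(hderiv t (Ioo_subset_Ico_self ht)).deriv]
  exact sum_sq_mul_cot_pos (hseg t (Ioo_subset_Ico_self ht)) (hseg_sum t) hvsum hv0

theorem sum_mul_add_Lob_lt_of_eq_add_log_sin {a x y : Fin 3 → ℝ} {c : ℝ} (ha : ∀ i, 0 < a i)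
    (hasum : ∑ i, a i = π) (hy : ∀ i, y i = c + log (sin (a i))) (hx : ∀ i, 0 ≤ x i)
    (hxsum : ∑ i, x i = π) (hxa : x ≠ a) :
    ∑ i, (x i * y i + Lob (x i)) < ∑ i, (a i * y i + Lob (a i)) := by
  set v : Fin 3 → ℝ := fun i => x i - a i
  have hvsum : ∑ i, v i = 0 := by simp [v, Finset.sum_sub_distrib, hxsum, hasum]
  have hv0 : v ≠ 0 := fun h => hxa (funext fun i => sub_eq_zero.mp (congrFun h i))
  have hseg : ∀ t ∈ Ico (0 : ℝ) 1, ∀ i, 0 < a i + t * v i := fun t ht i => by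
    have := hx i; have := ha i; have := ht.1; have := ht.2
    simp only [v]
    nlinarith
  have hψ := strictMonoOn_sum_mul_log_two_mul_sin hseg hasum hvsum hv0
  have hy' : ∀ i, y i = (c - log 2) + log (2 * sin (a i)) := fun i => by
    rw [hy, log_mul two_ne_zero (sin_pos_of_sum_eq_pi ha hasum i).ne']
    ring
  set φ : ℝ → ℝ := fun s => ∑ i, ((a i + s * v i) * y i + Lob (a i + s * v i))
  have hφ : StrictAntiOn φ (Icc 0 1) := by
    refine strictAntiOn_of_deriv_neg (convex_Icc 0 1) (by fun_prop) fun t ht => ?_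
    rw [interior_Icc] at ht
    have hsin : ∀ i, sin (a i + t * v i) ≠ 0 := fun i =>
      (sin_pos_of_sum_eq_pi (hseg t (Ioo_subset_Ico_self ht)) (by
        simp [Finset.sum_add_distrib, ← Finset.mul_sum, hvsum, hasum]) i).ne'
    rw [(hasDerivAt_sum_mul_add_Lob y hsin).deriv]
    have hderiv : ∑ i, v i * (y i - log (2 * sin (a i + t * v i))) =
        ∑ i, v i * log (2 * sin (a i + 0 * v i)) - ∑ i, v i * log (2 * sin (a i + t * v i)) +
          (c - log 2) * ∑ i, v i := by
      simp only [zero_mul, add_zero, Finset.mul_sum, ← Finset.sum_sub_distrib,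
        ← Finset.sum_add_distrib, hy']
      exact Finset.sum_congr rfl fun i _ => by ring
    rw [hderiv, hvsum, mul_zero, add_zero, sub_neg]
    exact hψ (left_mem_Ico.2 one_pos) (Ioo_subset_Ico_self ht) ht.1
  have := hφ (left_mem_Icc.2 zero_le_one) (right_mem_Icc.2 zero_le_one) one_pos
  simpa [φ, v] using this

theorem stmt19 (y : Fin 3 → ℝ)
    (htri : ∀ i j k : Fin 3, i ≠ j → j ≠ k → i ≠ k →
      Real.exp (y k) < Real.exp (y i) + Real.exp (y j)) :
    ((∀ i, 0 ≤ ang i (fun m => Real.exp (y m))) ∧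
      ang 0 (fun m => Real.exp (y m)) + ang 1 (fun m => Real.exp (y m)) +
        ang 2 (fun m => Real.exp (y m)) = Real.pi) ∧
    ∀ x : Fin 3 → ℝ, (∀ i, 0 ≤ x i) → x 0 + x 1 + x 2 = Real.pi →
      x ≠ (fun i => ang i (fun m => Real.exp (y m))) →
      ∑ i : Fin 3, (x i * y i + Lob (x i)) <
        ∑ i : Fin 3, (ang i (fun m => Real.exp (y m)) * y i +
          Lob (ang i (fun m => Real.exp (y m)))) := by
  set e : Fin 3 → ℝ := fun m => exp (y m)
  have he : ∀ i, 0 < e i := fun i => exp_pos (y i)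
  have hne : ∀ i : Fin 3, i + 1 ≠ i + 2 ∧ i + 2 ≠ i ∧ i + 1 ≠ i := by decide
  have htri' : ∀ i, e i < e (i + 1) + e (i + 2) := fun i =>
    htri _ _ _ (hne i).1 (hne i).2.1 (hne i).2.2
  have hH := heron_pos he htri'
  have hsum := ang_add_ang_add_ang he htri'
  refine ⟨⟨fun i => arccos_nonneg _, hsum⟩, fun x hx hxsum hxa => ?_⟩
  have hsum' : ∑ i, ang i e = π := by rwa [Fin.sum_univ_three]
  obtain ⟨d, hd, hlaw⟩ := exists_eq_mul_sin_ang he hH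
  refine sum_mul_add_Lob_lt_of_eq_add_log_sin (c := log d) (ang_pos he hH) hsum' (fun i => ?_) hx
    (by rwa [Fin.sum_univ_three]) hxa
  rw [← log_mul hd.ne' (sin_pos_of_sum_eq_pi (ang_pos he hH) hsum' i).ne', ← hlaw i, log_exp]
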